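/- arXiv:1604.07911 — 3 statements merged into one kernel-verified Lean document; each statement's English description precedes it below -/
import Mathlib

section
/- Let π satisfy Assumption 1. Then there exists a nonnegative integrable function π̃ on (0,1) (which can be taken of the form π̃ = c·π with c : (0,1) → (0,∞) decreasing and lim_{ε↓0} c(ε) = ∞) such that for every sequence x : ℕ → ℝ with x_i ≥ -1 for all i: if Σ_{i=1}^∞ x_i² = ∞ and S_n > A_n·G[π](A_n²) for infinitely many n, then limsup_{n→∞} ∫_0^1 ∏_{i=1}^n (1 + ε x_i) π̃(ε) dε = ∞. -/
open MeasureTheory Filter Set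
open scoped ENNReal

/-- Partial sum `S_n = x_1 + ... + x_n`. -/
noncomputable def S (x : ℕ → ℝ) (n : ℕ) : ℝ := ∑ i ∈ Finset.range n, x i

/-- Sum of squares `A_n² = x_1² + ... + x_n²`. -/
noncomputable def A2 (x : ℕ → ℝ) (n : ℕ) : ℝ := ∑ i ∈ Finset.range n, (x i) ^ 2

/-- Capital process of the Bayesian strategy with prior density `π`:
`K_n^π = ∫_0^1 ∏_{i=1}^n (1 + ε x_i) π(ε) dε`. -/
noncomputable def K (π : ℝ → ℝ) (x : ℕ → ℝ) (n : ℕ) : ℝ :=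
  ∫ ε in Set.Ioo (0 : ℝ) 1, (∏ i ∈ Finset.range n, (1 + ε * x i)) * π ε

/-- Assumption 1: `π` is a prior density, bounded below by `δπ` near the origin,
and `ε ↦ ε·π(ε)` is (weakly) increasing near the origin. -/
def Assumption1 (π : ℝ → ℝ) (επ δπ : ℝ) : Prop :=
  επ ∈ Set.Ioo (0 : ℝ) 1 ∧ 0 < δπ ∧
  (∀ ε ∈ Set.Icc (0 : ℝ) 1, 0 ≤ π ε) ∧
  MeasureTheory.IntegrableOn π (Set.Icc (0 : ℝ) 1) ∧
  (∀ ε ∈ Set.Ioo (0 : ℝ) επ, δπ ≤ π ε) ∧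
  MonotoneOn (fun ε => ε * π ε) (Set.Ioo (0 : ℝ) επ)

/-- Assumption 2: `ψ` is positive and increasing on `(M,∞)`, the integral
`∫_M^∞ ψ(λ) e^{-ψ(λ)²/2} dλ/λ` is finite, and `λ ψ(λ) e^{-ψ(λ)²/2} > δ` on `(M,∞)`. -/
def Assumption2 (ψ : ℝ → ℝ) (M δ : ℝ) : Prop :=
  0 < M ∧ 0 < δ ∧
  (∀ l ∈ Set.Ioi M, 0 < ψ l) ∧
  MonotoneOn ψ (Set.Ioi M) ∧
  MeasureTheory.IntegrableOn (fun l => ψ l * Real.exp (-(ψ l) ^ 2 / 2) / l) (Set.Ioi M) ∧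
  (∀ l ∈ Set.Ioi M, δ < l * ψ l * Real.exp (-(ψ l) ^ 2 / 2))

/-- The functional `F[ψ](ε) = (ψ(1/ε)/ε)·exp(-ψ(1/ε)²/2)`. -/
noncomputable def Ffun (ψ : ℝ → ℝ) (ε : ℝ) : ℝ :=
  ψ (1 / ε) / ε * Real.exp (-(ψ (1 / ε)) ^ 2 / 2)

/-- `β(ε) = max(-2 ln(ε π(ε)), 1)`. -/
noncomputable def betaFun (π : ℝ → ℝ) (ε : ℝ) : ℝ :=
  max (-2 * Real.log (ε * π ε)) 1

/-- The functional `G[π](λ) = √(β(1/λ) + ln β(1/λ))`. -/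
noncomputable def Gfun (π : ℝ → ℝ) (l : ℝ) : ℝ :=
  Real.sqrt (betaFun π (1 / l) + Real.log (betaFun π (1 / l)))

/-!
Bound the integrand below by `exp (ε S_n - A_n² ε²/2 - A_n² ε³) π̃(ε)` (from
`log (1 + t) ≥ t - t²/2 - ε t²` for `t ≥ -ε`) and integrate over a window of width `1/A_n`.
If the optimal bet `S_n/A_n²` stays above a fixed `a`, a window near `a` already gives capital
of order `e^{a A_n/8}/A_n`. Otherwise put the window at the optimal bet, where the exponent is
`u²/2 - O(1)` with `u = S_n/A_n`, and the monotonicity of `ε π(ε)` gives `π ≥ e^{-β/2}/ε`; the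
threshold `u > G[π](A_n²)` is exactly what makes `e^{u²/2 - β/2}/u` bounded below. The missing
divergence comes from the weight `c ε = 1 + #{k | ε < b k}`, where `π` has mass at most `2⁻ᵏ` on
`(0, b k)`, so that `c → ∞` at `0` while `c π` stays integrable; or, when `u` is large, from the
Gaussian factor.
-/

open Topology
open scoped ENNReal

noncomputable def stepWeight (b : ℕ → ℝ) (ε : ℝ) : ℝ := 1 + ∑' k, (Ioo 0 (b k)).indicator 1 ε

section stepWeight

variable {b : ℕ → ℝ}

lemma summable_indicator_Ioo (hb : Tendsto b atTop (𝓝 0)) (ε : ℝ) :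
    Summable fun k => (Ioo 0 (b k)).indicator (1 : ℝ → ℝ) ε := by
  have hev : ∀ᶠ k in atTop, ε ∉ Ioo 0 (b k) := by
    rcases le_or_gt ε 0 with hε | hε
    · exact Eventually.of_forall fun k h => h.1.not_ge hε
    · filter_upwards [hb.eventually (gt_mem_nhds hε)] with k hk h using h.2.not_gt hk
  obtain ⟨N, hN⟩ := eventually_atTop.1 hev
  refine summable_of_ne_finset_zero (s := Finset.range N) fun k hk => indicator_of_notMem ?_ _
  exact hN k (by simpa using hk)

lemma one_le_stepWeight (ε : ℝ) : 1 ≤ stepWeight b ε :=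
  le_add_of_nonneg_right (tsum_nonneg fun _ => indicator_nonneg (fun _ _ => zero_le_one) _)

lemma antitoneOn_stepWeight (hb : Tendsto b atTop (𝓝 0)) : AntitoneOn (stepWeight b) (Ioi 0) := by
  intro ε hε ε' _ hεε'
  refine (add_le_add_iff_left 1).2 (Summable.tsum_le_tsum (fun k => ?_)
    (summable_indicator_Ioo hb ε') (summable_indicator_Ioo hb ε))
  by_cases h : ε' ∈ Ioo 0 (b k)
  · have h' : ε ∈ Ioo 0 (b k) := ⟨hε, hεε'.trans_lt h.2⟩
    simp [indicator_of_mem h, indicator_of_mem h']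
  · rw [indicator_of_notMem h]
    exact indicator_nonneg (fun _ _ => zero_le_one) _

lemma tendsto_stepWeight (hb0 : ∀ k, 0 < b k) (hb : Tendsto b atTop (𝓝 0)) :
    Tendsto (stepWeight b) (𝓝[>] 0) atTop := by
  refine tendsto_atTop.2 fun C => ?_
  have hmem : ∀ᶠ ε in 𝓝[>] (0 : ℝ), ∀ k ∈ Finset.range ⌈C⌉₊, ε ∈ Ioo 0 (b k) :=
    (Finset.eventually_all _).2 fun k _ => Ioo_mem_nhdsGT (hb0 k)
  filter_upwards [hmem] with ε hε
  calc C ≤ ⌈C⌉₊ := Nat.le_ceil C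
    _ = ∑ k ∈ Finset.range ⌈C⌉₊, (Ioo 0 (b k)).indicator (1 : ℝ → ℝ) ε := by
        simp [Finset.sum_congr rfl fun k hk => indicator_of_mem (hε k hk) (1 : ℝ → ℝ)]
    _ ≤ ∑' k, (Ioo 0 (b k)).indicator (1 : ℝ → ℝ) ε :=
        (summable_indicator_Ioo hb ε).sum_le_tsum _ fun _ _ =>
          indicator_nonneg (fun _ _ => zero_le_one) _
    _ ≤ stepWeight b ε := le_add_of_nonneg_left zero_le_one

lemma enorm_stepWeight_mul (hb : Tendsto b atTop (𝓝 0)) (f : ℝ → ℝ) (ε : ℝ) :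
    ‖stepWeight b ε * f ε‖ₑ = ‖f ε‖ₑ + ∑' k, (Ioo 0 (b k)).indicator (fun ε => ‖f ε‖ₑ) ε := by
  have hnn : ∀ k, 0 ≤ (Ioo 0 (b k)).indicator (1 : ℝ → ℝ) ε :=
    fun k => indicator_nonneg (fun _ _ => zero_le_one) _
  rw [enorm_mul, Real.enorm_of_nonneg ((zero_le_one).trans (one_le_stepWeight ε)), stepWeight,
    ENNReal.ofReal_add zero_le_one (tsum_nonneg hnn),
    ENNReal.ofReal_tsum_of_nonneg hnn (summable_indicator_Ioo hb ε), add_mul, ENNReal.ofReal_one,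
    one_mul, ← ENNReal.tsum_mul_right]
  congr 1
  refine tsum_congr fun k => ?_
  by_cases h : ε ∈ Ioo 0 (b k) <;> simp [h]

lemma integrableOn_stepWeight_mul {μ : Measure ℝ} {f : ℝ → ℝ} (hf : IntegrableOn f (Ioo 0 1) μ)
    (hb : Tendsto b atTop (𝓝 0))
    (hfb : ∑' k, ∫⁻ ε in Ioo 0 (b k), ‖f ε‖ₑ ∂(μ.restrict (Ioo 0 1)) ≠ ∞) :
    IntegrableOn (fun ε => stepWeight b ε * f ε) (Ioo 0 1) μ := by
  refine ⟨(aemeasurable_restrict_of_antitoneOn measurableSet_Ioo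
    ((antitoneOn_stepWeight hb).mono Ioo_subset_Ioi_self)).aestronglyMeasurable.mul hf.1, ?_⟩
  have hmeas : AEMeasurable (fun ε => ‖f ε‖ₑ) (μ.restrict (Ioo 0 1)) := hf.1.enorm
  rw [HasFiniteIntegral, lintegral_congr (enorm_stepWeight_mul hb f), lintegral_add_left' hmeas,
    lintegral_tsum fun k => hmeas.indicator measurableSet_Ioo]
  simp only [lintegral_indicator measurableSet_Ioo]
  exact ENNReal.add_lt_top.2 ⟨hf.2, hfb.lt_top⟩

end stepWeight

lemma exists_seq_setLIntegral_Ioo_le {f : ℝ → ℝ} (hf : IntegrableOn f (Ioo 0 1)) :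
    ∃ b : ℕ → ℝ, (∀ k, 0 < b k) ∧ Tendsto b atTop (𝓝 0) ∧
      ∀ k, ∫⁻ ε in Ioo 0 (b k), ‖f ε‖ₑ ∂(volume.restrict (Ioo 0 1)) ≤ 2⁻¹ ^ k := by
  have hvol : Tendsto (fun m : ℕ => volume.restrict (Ioo 0 1) (Ioo (0 : ℝ) (2⁻¹ ^ m))) atTop
      (𝓝 0) := by
    have h : Tendsto (fun m : ℕ => ENNReal.ofReal ((2⁻¹ : ℝ) ^ m)) atTop (𝓝 0) := by
      simpa using ENNReal.tendsto_ofReal (tendsto_pow_atTop_nhds_zero_of_lt_one (by norm_num)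
        (by norm_num : (2⁻¹ : ℝ) < 1))
    refine tendsto_of_tendsto_of_tendsto_of_le_of_le tendsto_const_nhds h (fun _ => zero_le)
      fun m => ?_
    exact (Measure.restrict_apply_le _ _).trans (by rw [Real.volume_Ioo, sub_zero])
  have htail := tendsto_setLIntegral_zero hf.2.ne hvol
  have hm : ∀ k : ℕ, ∃ m, k ≤ m ∧
      ∫⁻ ε in Ioo 0 (2⁻¹ ^ m), ‖f ε‖ₑ ∂(volume.restrict (Ioo 0 1)) ≤ 2⁻¹ ^ k := fun k =>
    ((eventually_ge_atTop k).and
      (htail.eventually (ge_mem_nhds (ENNReal.pow_pos (by norm_num) k)))).exists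
  choose m hkm hm using hm
  refine ⟨fun k => 2⁻¹ ^ m k, fun k => by positivity, ?_, hm⟩
  exact (tendsto_pow_atTop_nhds_zero_of_lt_one (by norm_num) (by norm_num)).comp
    (tendsto_atTop_mono hkm tendsto_id)

theorem exists_antitoneOn_tendsto_atTop_integrableOn_mul {f : ℝ → ℝ}
    (hf : IntegrableOn f (Ioo 0 1)) :
    ∃ c : ℝ → ℝ, (∀ ε ∈ Ioo (0 : ℝ) 1, 0 < c ε) ∧ AntitoneOn c (Ioo 0 1) ∧
      Tendsto c (𝓝[>] 0) atTop ∧ IntegrableOn (fun ε => c ε * f ε) (Ioo 0 1) := by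
  obtain ⟨b, hb0, hb, hbf⟩ := exists_seq_setLIntegral_Ioo_le hf
  refine ⟨stepWeight b, fun ε _ => zero_lt_one.trans_le (one_le_stepWeight ε),
    (antitoneOn_stepWeight hb).mono Ioo_subset_Ioi_self, tendsto_stepWeight hb0 hb,
    integrableOn_stepWeight_mul hf hb ?_⟩
  refine ne_top_of_le_ne_top ?_ (ENNReal.tsum_le_tsum hbf)
  rw [ENNReal.tsum_geometric, ENNReal.one_sub_inv_two, inv_inv]
  exact ENNReal.ofNat_ne_top

section LogBound
open Real

lemma hasDerivAt_log_one_add_sub (ε : ℝ) {s : ℝ} (hs : -1 < s) :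
    HasDerivAt (fun s => log (1 + s) - (s - s ^ 2 / 2 - ε * s ^ 2))
      (s * (s + 2 * ε * (1 + s)) / (1 + s)) s := by
  have h1 : (1 + s) ≠ 0 := by linarith
  have := (((hasDerivAt_id s).const_add 1).log h1).sub
    (((hasDerivAt_id s).sub ((hasDerivAt_pow 2 s).div_const 2)).sub
      ((hasDerivAt_pow 2 s).const_mul ε))
  refine this.congr_deriv ?_
  simp only [id]
  field_simp
  ring

lemma sub_sub_mul_sq_le_log_one_add {ε t : ℝ} (hε0 : 0 ≤ ε) (hε : ε ≤ 1 / 2) (ht : -ε ≤ t) :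
    t - t ^ 2 / 2 - ε * t ^ 2 ≤ log (1 + t) := by
  set g : ℝ → ℝ := fun s => log (1 + s) - (s - s ^ 2 / 2 - ε * s ^ 2)
  have hg : ∀ s, -ε ≤ s → HasDerivAt g (s * (s + 2 * ε * (1 + s)) / (1 + s)) s :=
    fun s hs => hasDerivAt_log_one_add_sub ε (by linarith)
  have hcont : ∀ D ⊆ Ici (-ε), ContinuousOn g D :=
    fun D hD s hs => (hg s (hD hs)).continuousAt.continuousWithinAt
  -- `g'` has the sign of `s` on `[-ε, ∞)`, since `ε ≤ 1/2`.
  suffices g 0 ≤ g t by simpa [g] using this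
  rcases le_total 0 t with h0 | h0
  · refine monotoneOn_of_hasDerivWithinAt_nonneg (convex_Ici 0)
      (hcont _ fun s (hs : 0 ≤ s) => mem_Ici.2 (by linarith))
      (fun s hs => (hg s ?_).hasDerivWithinAt) (fun s hs => ?_) (mem_Ici.2 le_rfl) h0 h0 <;>
    rw [interior_Ici] at hs
    · linarith [hs.out]
    · have : 0 < s := hs
      positivity
  · refine antitoneOn_of_hasDerivWithinAt_nonpos (convex_Icc (-ε) 0) (hcont _ fun s hs => hs.1)
      (fun s hs => (hg s ?_).hasDerivWithinAt) (fun s hs => ?_) ⟨ht, h0⟩ ⟨by linarith, le_rfl⟩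
      h0 <;>
    rw [interior_Icc] at hs
    · exact hs.1.le
    · obtain ⟨hs1, hs2⟩ := hs
      apply div_nonpos_of_nonpos_of_nonneg _ (by linarith)
      exact mul_nonpos_of_nonpos_of_nonneg hs2.le (by nlinarith)

end LogBound

lemma exp_le_prod_one_add_mul {x : ℕ → ℝ} (hx : ∀ i, -1 ≤ x i) (n : ℕ) {ε : ℝ} (hε0 : 0 ≤ ε)
    (hε : ε ≤ 1 / 2) :
    Real.exp (ε * S x n - A2 x n * ε ^ 2 / 2 - A2 x n * ε ^ 3) ≤
      ∏ i ∈ Finset.range n, (1 + ε * x i) := by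
  have hpos : ∀ i, 0 < 1 + ε * x i := fun i => by nlinarith [hx i]
  rw [← Real.exp_log (Finset.prod_pos fun i _ => hpos i), Real.log_prod fun i _ => (hpos i).ne',
    Real.exp_le_exp]
  calc ε * S x n - A2 x n * ε ^ 2 / 2 - A2 x n * ε ^ 3
      = ∑ i ∈ Finset.range n, (ε * x i - (ε * x i) ^ 2 / 2 - ε * (ε * x i) ^ 2) := by
        simp only [S, A2, Finset.mul_sum, Finset.sum_mul, Finset.sum_div, ← Finset.sum_sub_distrib]
        exact Finset.sum_congr rfl fun i _ => by ring
    _ ≤ ∑ i ∈ Finset.range n, Real.log (1 + ε * x i) :=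
        Finset.sum_le_sum fun i _ => sub_sub_mul_sq_le_log_one_add hε0 hε (by nlinarith [hx i])

lemma mul_le_K_of_forall_Ioo_le {p : ℝ → ℝ} (hp0 : ∀ ε ∈ Ioo 0 1, 0 ≤ p ε)
    (hp : IntegrableOn p (Ioo 0 1)) {x : ℕ → ℝ} (hx : ∀ i, -1 ≤ x i) (n : ℕ) {l w m : ℝ}
    (hl : 0 ≤ l) (hw : 0 ≤ w) (hlw : l + w ≤ 1 / 2)
    (hm : ∀ ε ∈ Ioo l (l + w),
      m ≤ Real.exp (ε * S x n - A2 x n * ε ^ 2 / 2 - A2 x n * ε ^ 3) * p ε) :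
    m * w ≤ K p x n := by
  set f : ℝ → ℝ := fun ε => (∏ i ∈ Finset.range n, (1 + ε * x i)) * p ε
  have hprod : ∀ ε ∈ Ioo (0 : ℝ) 1, 0 ≤ ∏ i ∈ Finset.range n, (1 + ε * x i) :=
    fun ε hε => Finset.prod_nonneg fun i _ => by nlinarith [hx i, hε.1, hε.2]
  have hpIcc : IntegrableOn p (Icc 0 1) :=
    (integrableOn_Icc_iff_integrableOn_Ioo (by simp) (by simp)).2 hp
  have hf : IntegrableOn f (Ioo 0 1) :=
    (hpIcc.continuousOn_mul (by fun_prop) isCompact_Icc).mono_set Ioo_subset_Icc_self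
  have hI : Ioo l (l + w) ⊆ Ioo 0 1 := Ioo_subset_Ioo hl (by linarith)
  have hwin : m * w ≤ ∫ ε in Ioo l (l + w), f ε := by
    have := setIntegral_ge_of_const_le (c := m) measurableSet_Ioo (by simp) (fun ε hε => ?_)
      (hf.mono_set hI)
    · rwa [Real.volume_real_Ioo_of_le (by linarith), add_sub_cancel_left, smul_eq_mul,
        mul_comm] at this
    · exact (hm ε hε).trans (mul_le_mul_of_nonneg_right
        (exp_le_prod_one_add_mul hx n (by linarith [hε.1]) (by linarith [hε.2])) (hp0 ε (hI hε)))
  refine hwin.trans (setIntegral_mono_set hf ?_ hI.eventuallyLE)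
  filter_upwards [ae_restrict_mem measurableSet_Ioo] with ε hε
  exact mul_nonneg (hprod ε hε) (hp0 ε hε)

section RealBounds
open Real

lemma one_le_of_sqrt_add_log_le {β u : ℝ} (hβ : 1 ≤ β) (hu : √(β + log β) ≤ u) : 1 ≤ u :=
  (one_le_sqrt.2 (by linarith [log_nonneg hβ])).trans hu

lemma neg_log_two_div_two_le {β u : ℝ} (hβ : 1 ≤ β) (hu : √(β + log β) ≤ u) :
    -(log 2 / 2) ≤ u ^ 2 / 2 - log u - β / 2 := by
  set G := √(β + log β)
  have hlogβ : 0 ≤ log β := log_nonneg hβ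
  have hG2 : G ^ 2 = β + log β := sq_sqrt (by linarith)
  have hG1 : 1 ≤ G := one_le_sqrt.2 (by linarith)
  have hGu : log u - log G ≤ (u ^ 2 - G ^ 2) / 2 := by
    rw [← log_div (by linarith) (by linarith)]
    calc log (u / G) ≤ u / G - 1 := log_le_sub_one_of_pos (div_pos (by linarith) (by linarith))
      _ = (u - G) / G := by field_simp
      _ ≤ u - G := div_le_self (by linarith) hG1
      _ ≤ (u ^ 2 - G ^ 2) / 2 := by nlinarith
  have hlogG : log G ≤ (log 2 + log β) / 2 := by
    have h2β : G ^ 2 ≤ 2 * β := by linarith [log_le_sub_one_of_pos (by linarith : 0 < β)]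
    have := log_le_log (by positivity) h2β
    rw [log_pow, log_mul two_ne_zero (by linarith)] at this
    push_cast at this
    linarith
  linarith

lemma exp_neg_three_le_of_cube_le {A u β : ℝ} (hA : 0 < A) (hβ : 1 ≤ β) (hu : √(β + log β) ≤ u)
    (huA : 8 * u ^ 3 ≤ A) :
    exp (-3) ≤ exp (u ^ 2 / 2 - β / 2 - 1 / 2 - 8 * u ^ 3 / A) / (2 * u) := by
  have hu1 := one_le_of_sqrt_add_log_le hβ hu
  rw [← exp_log (by linarith : 0 < 2 * u), ← exp_sub, exp_le_exp, log_mul two_ne_zero (by linarith)]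
  have hcube : 8 * u ^ 3 / A ≤ 1 := (div_le_one hA).2 huA
  linarith [neg_log_two_div_two_le hβ hu, log_two_lt_d9]

lemma le_exp_div_of_lt_cube {A u β B D : ℝ} (hA : 0 < A) (hB : 0 ≤ B) (hD : 0 ≤ D)
    (hu : 42 + 2 * B + 4 * D ≤ u) (huA : u / A ≤ 1 / 32) (hAu : A < 8 * u ^ 3)
    (hβ : β ≤ 4 * log A + B) :
    D ≤ exp (u ^ 2 / 2 - β / 2 - 1 / 2 - 8 * u ^ 3 / A) / (2 * u) := by
  have hu0 : 0 < u := by linarith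
  have hcube : 8 * u ^ 3 / A ≤ u ^ 2 / 4 := by
    rw [show 8 * u ^ 3 / A = 8 * u ^ 2 * (u / A) by ring]
    nlinarith [sq_nonneg u]
  have hlogA : log A < 4 * log u := by
    have h4 : log (u ^ 4) = 4 * log u := by rw [log_pow]; norm_num
    rw [← h4]
    exact log_lt_log hA (hAu.trans_le (by nlinarith [pow_pos hu0 3]))
  rw [← exp_log (by linarith : 0 < 2 * u), ← exp_sub, log_mul two_ne_zero hu0.ne']
  refine le_trans ?_ ((le_add_of_nonneg_right zero_le_one).trans (add_one_le_exp _))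
  nlinarith [log_le_sub_one_of_pos hu0, log_two_lt_d9]

end RealBounds

section Windows

variable {p : ℝ → ℝ} {x : ℕ → ℝ} {n : ℕ} {A u m : ℝ}

lemma le_K_of_le_ratio (hp0 : ∀ ε ∈ Ioo 0 1, 0 ≤ p ε) (hp : IntegrableOn p (Ioo 0 1))
    (hx : ∀ i, -1 ≤ x i) {a M : ℝ} (ha : 0 < a) (ha8 : a ≤ 1 / 8) (hm0 : 0 < m)
    (hm : ∀ ε ∈ Ioo (a / 2) a, m ≤ p ε) (hA2 : 2 / a ≤ A) (hAM : 128 * M / (a ^ 2 * m) ≤ A)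
    (hL : A2 x n = A ^ 2) (hS : S x n = u * A) (hu : 1 ≤ u) (hau : a ≤ u / A) :
    M ≤ K p x n := by
  have hA : 0 < A := (div_pos two_pos ha).trans_le hA2
  have hw : 1 / A ≤ a / 2 := by rw [div_le_iff₀ hA]; rw [div_le_iff₀ ha] at hA2; linarith
  have hua : a * A ≤ u := (le_div_iff₀ hA).1 hau
  have hwin := mul_le_K_of_forall_Ioo_le hp0 hp hx n (l := a / 2) (w := 1 / A)
    (m := Real.exp (a * A / 8) * m) (by positivity) (by positivity) (by linarith) fun ε hε => by
      have hεa : ε < a := by linarith [hε.2]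
      have hε0 : 0 < ε := by linarith [hε.1]
      refine mul_le_mul (Real.exp_le_exp.2 ?_) (hm ε ⟨hε.1, hεa⟩) hm0.le (Real.exp_nonneg _)
      rw [hL, hS]
      have hAε : A * ε ≤ u := by nlinarith
      have hquad : A ^ 2 * ε ^ 2 / 2 + A ^ 2 * ε ^ 3 ≤ 5 / 8 * (ε * (u * A)) := by
        have := mul_le_mul hAε
          (mul_le_mul_of_nonneg_left (show ε * (1 / 2 + ε) ≤ 5 / 8 * ε by nlinarith) hA.le)
          (by positivity) (by linarith)
        linarith
      have hlin : a / 2 * A ≤ ε * (u * A) :=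
        calc a / 2 * A ≤ ε * A := mul_le_mul_of_nonneg_right hε.1.le hA.le
          _ ≤ ε * (u * A) := mul_le_mul_of_nonneg_left (by nlinarith) hε0.le
      linarith [mul_pos ha hA]
  have hexp : (a * A / 8) ^ 2 / 2 ≤ Real.exp (a * A / 8) := by
    simpa using Real.pow_div_factorial_le_exp (a * A / 8) (by positivity) 2
  have hM : 128 * M ≤ A * (a ^ 2 * m) := (div_le_iff₀ (by positivity)).1 hAM
  refine le_trans ?_ hwin
  calc M ≤ (a * A / 8) ^ 2 / 2 * m * (1 / A) := by
        field_simp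
        nlinarith
    _ ≤ Real.exp (a * A / 8) * m * (1 / A) := by gcongr

lemma exp_mul_le_K_of_ratio_le (hp0 : ∀ ε ∈ Ioo 0 1, 0 ≤ p ε) (hp : IntegrableOn p (Ioo 0 1))
    (hx : ∀ i, -1 ≤ x i) (hA : 0 < A) (hm0 : 0 ≤ m)
    (hm : ∀ ε ∈ Ioo (u / A) (u / A + 1 / A), m ≤ p ε)
    (hL : A2 x n = A ^ 2) (hS : S x n = u * A) (hu : 1 ≤ u) (huA : u / A ≤ 1 / 4) :
    Real.exp (u ^ 2 / 2 - 1 / 2 - 8 * u ^ 3 / A) * m * (1 / A) ≤ K p x n := by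
  have h1u : 1 / A ≤ u / A := div_le_div_of_nonneg_right hu hA.le
  refine mul_le_K_of_forall_Ioo_le hp0 hp hx n (by positivity) (by positivity) (by linarith)
    fun ε hε => mul_le_mul (Real.exp_le_exp.2 ?_) (hm ε hε) hm0 (Real.exp_nonneg _)
  rw [hL, hS]
  have hlo : u < A * ε := by linarith [(div_lt_iff₀ hA).1 hε.1]
  have hhi : A * ε ≤ u + 1 := by
    have := hε.2; rw [← add_div, lt_div_iff₀ hA] at this; linarith
  have hcube : A ^ 2 * ε ^ 3 ≤ 8 * u ^ 3 / A := by
    rw [le_div_iff₀ hA]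
    have : (A * ε) ^ 3 ≤ (2 * u) ^ 3 := pow_le_pow_left₀ (by linarith) (by linarith) 3
    nlinarith
  nlinarith

end Windows

namespace Assumption1

variable {π : ℝ → ℝ} {επ δπ : ℝ}

lemma mul_nonneg_of_pos (hπ : Assumption1 π επ δπ) {c : ℝ → ℝ}
    (hc_pos : ∀ ε ∈ Ioo (0 : ℝ) 1, 0 < c ε) : ∀ ε ∈ Ioo (0 : ℝ) 1, 0 ≤ c ε * π ε :=
  fun ε hε => mul_nonneg (hc_pos ε hε).le (hπ.2.2.1 ε (Ioo_subset_Icc_self hε))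

lemma exp_neg_betaFun_div_two_le (hπ : Assumption1 π επ δπ) {l ε : ℝ} (hl : 0 < l)
    (hlε : l ≤ ε) (hε : ε < επ) : Real.exp (-betaFun π l / 2) ≤ ε * π ε := by
  obtain ⟨-, hδ, -, -, hπδ, hmono⟩ := hπ
  have hlπ : 0 < l * π l := mul_pos hl (hδ.trans_le (hπδ l ⟨hl, hlε.trans_lt hε⟩))
  calc Real.exp (-betaFun π l / 2) ≤ Real.exp (Real.log (l * π l)) :=
        Real.exp_le_exp.2
          (by linarith [show -2 * Real.log (l * π l) ≤ betaFun π l from le_max_left _ _])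
    _ = l * π l := Real.exp_log hlπ
    _ ≤ ε * π ε := hmono ⟨hl, hlε.trans_lt hε⟩ ⟨hl.trans_le hlε, hε⟩ hlε

lemma betaFun_le (hπ : Assumption1 π επ δπ) {l : ℝ} (hl : 0 < l) (hlε : l < επ) :
    betaFun π l ≤ -2 * Real.log l + 2 * |Real.log δπ| + 1 := by
  obtain ⟨⟨-, hεπ1⟩, hδ, -, -, hπδ, -⟩ := hπ
  have hπl := hπδ l ⟨hl, hlε⟩
  have hlog : Real.log l ≤ 0 := Real.log_nonpos hl.le (by linarith)
  refine max_le ?_ (by linarith [abs_nonneg (Real.log δπ)])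
  rw [Real.log_mul hl.ne' (hδ.trans_le hπl).ne']
  linarith [Real.log_le_log hδ hπl, neg_abs_le (Real.log δπ)]

lemma mul_exp_div_le_K (hπ : Assumption1 π επ δπ) {c : ℝ → ℝ}
    (hc_pos : ∀ ε ∈ Ioo (0 : ℝ) 1, 0 < c ε) (hc_anti : AntitoneOn c (Ioo 0 1))
    (hint : IntegrableOn (fun ε => c ε * π ε) (Ioo 0 1)) {x : ℕ → ℝ} (hx : ∀ i, -1 ≤ x i)
    {n : ℕ} {A u : ℝ} (hA : 1 ≤ A) (hL : A2 x n = A ^ 2) (hS : S x n = u * A) (hu : 1 ≤ u)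
    (huεπ : 2 * u / A < επ) (huA : u / A ≤ 1 / 4) :
    c (2 * u / A) * (Real.exp (u ^ 2 / 2 - betaFun π (1 / A ^ 2) / 2 - 1 / 2 - 8 * u ^ 3 / A) /
      (2 * u)) ≤ K (fun ε => c ε * π ε) x n := by
  have hA0 : 0 < A := by linarith
  have hεπ1 : επ < 1 := hπ.1.2
  set β := betaFun π (1 / A ^ 2)
  have h1A : 1 / A ^ 2 ≤ u / A := by
    rw [div_le_div_iff₀ (by positivity) hA0]; nlinarith
  have h2u : 2 * u / A ∈ Ioo (0 : ℝ) 1 := ⟨by positivity, by linarith⟩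
  have hm : ∀ ε ∈ Ioo (u / A) (u / A + 1 / A),
      c (2 * u / A) * (Real.exp (-β / 2) / (2 * u / A)) ≤ c ε * π ε := by
    intro ε hε
    have hε2 : ε ≤ 2 * u / A := by
      have := hε.2; rw [← add_div] at this; rw [le_div_iff₀ hA0]
      rw [lt_div_iff₀ hA0] at this; nlinarith
    have hε0 : 0 < ε := (div_pos (by linarith) hA0).trans hε.1
    have hεI : ε ∈ Ioo (0 : ℝ) 1 := ⟨hε0, by linarith [h2u.2]⟩
    refine mul_le_mul (hc_anti hεI h2u hε2) ?_ (by positivity) (hc_pos ε hεI).le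
    calc Real.exp (-β / 2) / (2 * u / A) ≤ Real.exp (-β / 2) / ε :=
          div_le_div_of_nonneg_left (Real.exp_nonneg _) hε0 hε2
      _ ≤ π ε := by
          rw [div_le_iff₀ hε0, mul_comm]
          exact hπ.exp_neg_betaFun_div_two_le (by positivity) (h1A.trans hε.1.le)
            (hε2.trans_lt huεπ)
  have hK := exp_mul_le_K_of_ratio_le (hπ.mul_nonneg_of_pos hc_pos) hint hx hA0
    (by have := hc_pos _ h2u; positivity) hm hL hS hu huA
  refine le_of_eq_of_le ?_ hK
  rw [show u ^ 2 / 2 - β / 2 - 1 / 2 - 8 * u ^ 3 / A = (u ^ 2 / 2 - 1 / 2 - 8 * u ^ 3 / A) + -β / 2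
    by ring, Real.exp_add]
  field_simp

lemma le_K_of_ratio_lt (hπ : Assumption1 π επ δπ) {c : ℝ → ℝ}
    (hc_pos : ∀ ε ∈ Ioo (0 : ℝ) 1, 0 < c ε) (hc_anti : AntitoneOn c (Ioo 0 1))
    (hint : IntegrableOn (fun ε => c ε * π ε) (Ioo 0 1)) {x : ℕ → ℝ} (hx : ∀ i, -1 ≤ x i)
    {n : ℕ} {M a ρ A u : ℝ} (hM : 0 ≤ M) (ha0 : 0 < a) (haεπ : 2 * a ≤ επ) (ha32 : a ≤ 1 / 32)
    (hρ0 : 0 < ρ) (hρ : ∀ s ∈ Ioc 0 ρ, M * Real.exp 3 ≤ c s) (hA1 : 1 ≤ A)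
    (hAεπ : 2 / επ ≤ A) (hAρ : 1 / ρ ^ 3 ≤ A)
    (hAu : 8 * (42 + 2 * (2 * |Real.log δπ| + 1) + 4 * (M / c (2 * a))) ^ 3 ≤ A)
    (hL : A2 x n = A ^ 2) (hS : S x n = u * A)
    (hGu : √(betaFun π (1 / A ^ 2) + Real.log (betaFun π (1 / A ^ 2))) < u) (hua : u / A < a) :
    M ≤ K (fun ε => c ε * π ε) x n := by
  have hεπ0 : 0 < επ := hπ.1.1
  have hA0 : 0 < A := by linarith
  set β := betaFun π (1 / A ^ 2)
  have hβ1 : 1 ≤ β := le_max_right _ _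
  have hu1 := one_le_of_sqrt_add_log_le hβ1 hGu.le
  have h2a : 2 * a ∈ Ioo (0 : ℝ) 1 := ⟨by linarith, by linarith [hπ.1.2]⟩
  have h2u : 2 * u / A ∈ Ioo (0 : ℝ) 1 :=
    ⟨div_pos (by linarith) hA0, by rw [mul_div_assoc]; linarith [hπ.1.2]⟩
  refine le_trans ?_ (hπ.mul_exp_div_le_K hc_pos hc_anti hint hx hA1 hL hS hu1
    (by rw [mul_div_assoc]; linarith) (by linarith))
  -- If `8 u³ ≤ A` the bet `2u/A` is close to `0`, so `c` is large there; otherwise `u` is so large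
  -- that the Gaussian factor alone exceeds `M / c (2a)`.
  rcases le_or_gt (8 * u ^ 3) A with hsmall | hlarge
  · have h2uρ : 2 * u / A ≤ ρ := by
      refine (pow_le_pow_iff_left₀ h2u.1.le hρ0.le three_ne_zero).1 ?_
      rw [div_le_iff₀ (pow_pos hρ0 3)] at hAρ
      calc (2 * u / A) ^ 3 = 8 * u ^ 3 / A ^ 3 := by ring
        _ ≤ A / A ^ 3 := by gcongr
        _ ≤ ρ ^ 3 := by rw [div_le_iff₀ (by positivity)]; nlinarith [pow_pos hA0 2]
    calc M = M * Real.exp 3 * Real.exp (-3) := by rw [mul_assoc, ← Real.exp_add]; simp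
      _ ≤ _ := mul_le_mul (hρ _ ⟨h2u.1, h2uρ⟩) (exp_neg_three_le_of_cube_le hA0 hβ1 hGu.le hsmall)
          (Real.exp_nonneg _) (hc_pos _ h2u).le
  · have hD : 0 ≤ M / c (2 * a) := div_nonneg hM (hc_pos _ h2a).le
    have hu : 42 + 2 * (2 * |Real.log δπ| + 1) + 4 * (M / c (2 * a)) ≤ u :=
      (lt_of_pow_lt_pow_left₀ 3 (by linarith) (by linarith)).le
    have hβ : β ≤ 4 * Real.log A + (2 * |Real.log δπ| + 1) := by
      have hlog : Real.log (1 / A ^ 2) = -(2 * Real.log A) := by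
        rw [one_div, Real.log_inv, Real.log_pow]; push_cast; ring
      have h1A2 : 1 / A ^ 2 < επ := calc
        1 / A ^ 2 ≤ 1 / A := by gcongr; nlinarith
        _ ≤ επ / 2 := by rw [div_le_iff₀ hA0]; rw [div_le_iff₀ hεπ0] at hAεπ; linarith
        _ < επ := by linarith
      linarith [hπ.betaFun_le (by positivity) h1A2]
    calc M = c (2 * a) * (M / c (2 * a)) := (mul_div_cancel₀ M (hc_pos _ h2a).ne').symm
      _ ≤ _ := mul_le_mul (hc_anti h2u h2a (by rw [mul_div_assoc]; linarith))
          (le_exp_div_of_lt_cube hA0 (by positivity) hD hu (by linarith) hlarge hβ) hD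
          (hc_pos _ h2u).le

lemma exists_forall_le_K (hπ : Assumption1 π επ δπ) {c : ℝ → ℝ}
    (hc_pos : ∀ ε ∈ Ioo (0 : ℝ) 1, 0 < c ε) (hc_anti : AntitoneOn c (Ioo 0 1))
    (hc_tend : Tendsto c (𝓝[>] 0) atTop) (hint : IntegrableOn (fun ε => c ε * π ε) (Ioo 0 1))
    {x : ℕ → ℝ} (hx : ∀ i, -1 ≤ x i) {M : ℝ} (hM : 0 ≤ M) :
    ∃ T, ∀ n, T ≤ √(A2 x n) → √(A2 x n) * Gfun π (A2 x n) < S x n →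
      M ≤ K (fun ε => c ε * π ε) x n := by
  obtain ⟨⟨hεπ0, -⟩, hδ, -, -, hπδ, -⟩ := id hπ
  set a := min (επ / 2) (1 / 32)
  have ha0 : 0 < a := lt_min (by linarith) (by norm_num)
  have haεπ : 2 * a ≤ επ := by linarith [min_le_left (επ / 2) (1 / 32)]
  have ha32 : a ≤ 1 / 32 := min_le_right _ _
  obtain ⟨ρ, hρ0, hρ⟩ := mem_nhdsGT_iff_exists_Ioc_subset.1
    (hc_tend.eventually_ge_atTop (M * Real.exp 3))
  refine ⟨max 1 (max (2 / επ) (max (2 / a) (max (128 * M / (a ^ 2 * (c a * δπ)))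
    (max (1 / ρ ^ 3) (8 * (42 + 2 * (2 * |Real.log δπ| + 1) + 4 * (M / c (2 * a))) ^ 3))))),
    fun n hT hcross => ?_⟩
  simp only [max_le_iff] at hT
  obtain ⟨hA1, hAεπ, hAa, hAM, hAρ, hAu⟩ := hT
  set A := √(A2 x n)
  have hA0 : 0 < A := by linarith
  have hL : A2 x n = A ^ 2 := (Real.sq_sqrt (Finset.sum_nonneg fun i _ => sq_nonneg (x i))).symm
  set u := S x n / A
  have hS : S x n = u * A := (div_mul_cancel₀ _ hA0.ne').symm
  have hGu : √(betaFun π (1 / A ^ 2) + Real.log (betaFun π (1 / A ^ 2))) < u := by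
    rw [lt_div_iff₀ hA0, mul_comm]
    simpa only [Gfun, hL] using hcross
  rcases le_or_gt a (u / A) with hau | hua
  · have hu1 := one_le_of_sqrt_add_log_le (le_max_right _ _) hGu.le
    refine le_K_of_le_ratio (hπ.mul_nonneg_of_pos hc_pos) hint hx ha0 (by linarith)
      (by have := hc_pos a ⟨ha0, by linarith⟩; positivity) (fun ε hε => ?_) hAa hAM hL hS hu1 hau
    have hεI : ε ∈ Ioo (0 : ℝ) 1 := ⟨by linarith [hε.1], by linarith [hε.2]⟩
    exact mul_le_mul (hc_anti hεI ⟨ha0, by linarith⟩ hε.2.le) (hπδ ε ⟨hεI.1, by linarith [hε.2]⟩)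
      hδ.le (hc_pos ε hεI).le
  · exact hπ.le_K_of_ratio_lt hc_pos hc_anti hint hx hM ha0 haεπ ha32 hρ0 (fun s hs => hρ hs) hA1
      hAεπ hAρ hAu hL hS hGu hua

end Assumption1

lemma limsup_coe_eq_top_of_frequently_le {f : ℕ → ℝ}
    (h : ∀ M : ℝ, 0 ≤ M → ∃ᶠ n in atTop, M ≤ f n) :
    limsup (fun n => ((f n : ℝ) : EReal)) atTop = ⊤ := by
  refine (EReal.eq_top_iff_forall_lt _).2 fun y => ?_
  calc (y : EReal) < ((max y 0 + 1 : ℝ) : EReal) :=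
        EReal.coe_lt_coe_iff.2 (by linarith [le_max_left y 0])
    _ ≤ _ := le_limsup_of_frequently_le'
        ((h _ (by positivity)).mono fun n hn => EReal.coe_le_coe_iff.2 hn)

theorem efkp_general_prior (π : ℝ → ℝ) (επ δπ : ℝ) (hπ : Assumption1 π επ δπ) :
    ∃ πt : ℝ → ℝ,
      (∃ c : ℝ → ℝ, (∀ ε ∈ Set.Ioo (0 : ℝ) 1, 0 < c ε) ∧
        AntitoneOn c (Set.Ioo (0 : ℝ) 1) ∧
        Filter.Tendsto c (nhdsWithin (0 : ℝ) (Set.Ioi 0)) Filter.atTop ∧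
        ∀ ε ∈ Set.Ioo (0 : ℝ) 1, πt ε = c ε * π ε) ∧
      (∀ ε ∈ Set.Ioo (0 : ℝ) 1, 0 ≤ πt ε) ∧
      MeasureTheory.IntegrableOn πt (Set.Ioo (0 : ℝ) 1) ∧
      ∀ x : ℕ → ℝ, (∀ i, -1 ≤ x i) →
        Filter.Tendsto (A2 x) Filter.atTop Filter.atTop →
        (∃ᶠ n in Filter.atTop, Real.sqrt (A2 x n) * Gfun π (A2 x n) < S x n) →
        Filter.limsup (fun n => ((K πt x n : ℝ) : EReal)) Filter.atTop = ⊤ := by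
  obtain ⟨c, hc_pos, hc_anti, hc_tend, hint⟩ :=
    exists_antitoneOn_tendsto_atTop_integrableOn_mul (hπ.2.2.2.1.mono_set Ioo_subset_Icc_self)
  refine ⟨fun ε => c ε * π ε, ⟨c, hc_pos, hc_anti, hc_tend, fun _ _ => rfl⟩,
    hπ.mul_nonneg_of_pos hc_pos, hint, fun x hx hA2 hcross => ?_⟩
  refine limsup_coe_eq_top_of_frequently_le fun M hM => ?_
  obtain ⟨T, hT⟩ := hπ.exists_forall_le_K hc_pos hc_anti hc_tend hint hx hM
  have hT_ev : ∀ᶠ n in atTop, T ≤ √(A2 x n) :=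
    (Real.tendsto_sqrt_atTop.comp hA2).eventually_ge_atTop T
  exact (hcross.and_eventually hT_ev).mono fun n hn => hT n hn.2 hn.1
end

section
/- Let (b_n) be an increasing sequence of positive reals with lim_n b_n = ∞ and Σ_{n=1}^∞ 1/b_n < ∞. Then there exists a prudent strategy (K_0, M) for Skeptic in the one-sided unbounded forecasting game such that for every path x with S_n/b_n not converging to 0, sup_n K_n(x) = ∞. -/
open Filter Set

/-- Capital process of the strategy `(K₀, M)` along the path `x`:
`K_n(x) = K₀ + Σ_{i=1}^n M_i(x_1,...,x_{i-1})·x_i`, where the bet on round `i`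
is determined by the history of Reality's previous moves. -/
noncomputable def capital (K₀ : ℝ) (M : List ℝ → ℝ) (x : ℕ → ℝ) (n : ℕ) : ℝ :=
  K₀ + ∑ i ∈ Finset.range n, M (List.ofFn (fun j : Fin i => x j)) * x i

/-- A strategy is prudent if its capital stays nonnegative along every path
of the one-sided unbounded forecasting game. -/
def Prudent (K₀ : ℝ) (M : List ℝ → ℝ) : Prop :=
  ∀ x : ℕ → ℝ, (∀ n, -1 ≤ x n) → ∀ n, 0 ≤ capital K₀ M x n

/-!
Skeptic bets `1 / b_n` on round `n`. Since `x_n ≥ -1`, his loss is at most `Σ 1 / b_n < ∞`,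
so starting with more than that capital keeps him prudent. If his capital stays bounded, then
`Σ x_n / b_n` has bounded partial sums and terms bounded below by the summable `-1 / b_n`, hence
converges, and Kronecker's lemma gives `S_n / b_n → 0`.
-/

open Finset Asymptotics Topology

theorem sum_range_mul_by_parts {R : Type*} [CommRing R] (b a : ℕ → R) (n : ℕ) :
    ∑ i ∈ range n, b i * a i =
      b n * ∑ i ∈ range n, a i - ∑ i ∈ range n, (b (i + 1) - b i) * ∑ j ∈ range (i + 1), a j := by
  induction n with
  | zero => simp
  | succ n ih =>
    rw [sum_range_succ, ih, sum_range_succ (fun i => (b (i + 1) - b i) * _), sum_range_succ a]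
    ring

theorem Filter.Tendsto.cesaro_increments {b t : ℕ → ℝ} {l : ℝ} (ht : Tendsto t atTop (𝓝 l))
    (hmono : Monotone b) (hlim : Tendsto b atTop atTop) :
    Tendsto (fun n => (∑ i ∈ range n, (b (i + 1) - b i) * t i) / b n) atTop (𝓝 l) := by
  have hw : ∀ i, 0 ≤ b (i + 1) - b i := fun i => sub_nonneg.2 (hmono i.le_succ)
  have hconst : ∀ c : ℝ, (fun _ => c) =o[atTop] b := fun c =>
    isLittleO_const_left.2 (Or.inr (tendsto_norm_atTop_atTop.comp hlim))
  have hdev : (fun i => (b (i + 1) - b i) * (t i - l)) =o[atTop] fun i => b (i + 1) - b i := by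
    simpa using (isBigO_refl _ atTop).mul_isLittleO
      ((isLittleO_one_iff ℝ).2 (tendsto_sub_nhds_zero_iff.2 ht))
  have hsum_dev : (fun n => ∑ i ∈ range n, (b (i + 1) - b i) * (t i - l)) =o[atTop]
      fun n => b n - b 0 := by
    simpa only [sum_range_sub b] using
      hdev.sum_range hw ((tendsto_atTop_add_const_right _ (-b 0) hlim).congr fun n => by
        rw [sum_range_sub, sub_eq_add_neg])
  have hmain : (fun n => ∑ i ∈ range n, (b (i + 1) - b i) * t i - l * b n) =o[atTop] b := by
    refine ((hsum_dev.trans_isBigO ((isBigO_refl b _).sub (hconst _).isBigO)).sub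
      (hconst (l * b 0))).congr_left fun n => ?_
    have hincr := sum_range_sub b n
    simp only [mul_sub, sum_sub_distrib, ← sum_mul] at hincr ⊢
    rw [hincr]
    ring
  have hlim_l := hmain.tendsto_div_nhds_zero.add_const l
  rw [zero_add] at hlim_l
  refine hlim_l.congr' ?_
  filter_upwards [hlim.eventually_gt_atTop 0] with n hn
  field_simp
  ring

theorem Filter.Tendsto.kronecker {a b : ℕ → ℝ} {l : ℝ}
    (ha : Tendsto (fun n => ∑ i ∈ range n, a i) atTop (𝓝 l))
    (hmono : Monotone b) (hlim : Tendsto b atTop atTop) :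
    Tendsto (fun n => (∑ i ∈ range n, b i * a i) / b n) atTop (𝓝 0) := by
  have hmean := (ha.comp (tendsto_add_atTop_nat 1)).cesaro_increments hmono hlim
  refine (sub_self l ▸ ha.sub hmean).congr' ?_
  filter_upwards [hlim.eventually_gt_atTop 0] with n hn
  rw [sum_range_mul_by_parts b a n, sub_div, mul_div_cancel_left₀ _ hn.ne']
  rfl

theorem summable_of_sum_range_le_of_neg_le {a c : ℕ → ℝ} {B : ℝ} (hc : Summable c)
    (hc0 : ∀ i, 0 ≤ c i) (hac : ∀ i, -c i ≤ a i) (hB : ∀ n, ∑ i ∈ range n, a i ≤ B) :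
    Summable a := by
  have hshift : Summable fun i => a i + c i := by
    refine summable_of_sum_range_le (c := B + ∑' i, c i) (fun i => by linarith [hac i]) fun n => ?_
    rw [sum_add_distrib]
    linarith [hB n, hc.sum_le_tsum (range n) fun i _ => hc0 i]
  simpa using hshift.sub hc

/-- On round `n` the history has length `n`, so Skeptic bets `1 / b n`. -/
noncomputable def reciprocalBet (b : ℕ → ℝ) (history : List ℝ) : ℝ := 1 / b history.length

theorem capital_reciprocalBet (K₀ : ℝ) (b x : ℕ → ℝ) (n : ℕ) :
    capital K₀ (reciprocalBet b) x n = K₀ + ∑ i ∈ range n, x i / b i := by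
  simp [capital, reciprocalBet, div_eq_inv_mul]

theorem neg_one_div_le_div {b y : ℝ} (hb : 0 ≤ b) (hy : -1 ≤ y) : -(1 / b) ≤ y / b := by
  rw [← neg_div]
  exact div_le_div_of_nonneg_right hy hb

theorem prudent_reciprocalBet {b : ℕ → ℝ} (hb : ∀ n, 0 ≤ b n) (hsum : Summable fun n => 1 / b n)
    {K₀ : ℝ} (hK₀ : ∑' n, 1 / b n ≤ K₀) : Prudent K₀ (reciprocalBet b) := by
  intro x hx n
  have hloss : -∑ i ∈ range n, 1 / b i ≤ ∑ i ∈ range n, x i / b i := by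
    rw [← sum_neg_distrib]
    exact sum_le_sum fun i _ => neg_one_div_le_div (hb i) (hx i)
  have hfin : ∑ i ∈ range n, 1 / b i ≤ ∑' n, 1 / b n :=
    hsum.sum_le_tsum _ fun i _ => one_div_nonneg.2 (hb i)
  rw [capital_reciprocalBet]
  linarith

theorem summable_div_of_bddAbove_capital {b x : ℕ → ℝ} {K₀ : ℝ} (hb : ∀ n, 0 ≤ b n)
    (hsum : Summable fun n => 1 / b n) (hx : ∀ n, -1 ≤ x n)
    (hbdd : BddAbove (Set.range fun n => capital K₀ (reciprocalBet b) x n)) :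
    Summable fun i => x i / b i := by
  obtain ⟨B, hB⟩ := hbdd
  refine summable_of_sum_range_le_of_neg_le hsum (fun i => one_div_nonneg.2 (hb i))
    (fun i => neg_one_div_le_div (hb i) (hx i)) (B := B - K₀) fun n => ?_
  have hn : capital K₀ (reciprocalBet b) x n ≤ B := hB ⟨n, rfl⟩
  rw [capital_reciprocalBet] at hn
  linarith

theorem skeptic_forces_slln_rate (b : ℕ → ℝ) (hb : ∀ n, 0 < b n) (hmono : Monotone b)
    (hlim : Filter.Tendsto b Filter.atTop Filter.atTop)
    (hsum : Summable fun n => 1 / b n) :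
    ∃ K₀ : ℝ, ∃ M : List ℝ → ℝ, 0 < K₀ ∧ Prudent K₀ M ∧
      ∀ x : ℕ → ℝ, (∀ n, -1 ≤ x n) →
        ¬ Filter.Tendsto (fun n => S x n / b n) Filter.atTop (nhds 0) →
        ¬ BddAbove (Set.range fun n => capital K₀ M x n) := by
  have hb₀ : ∀ n, 0 ≤ b n := fun n => (hb n).le
  have hC : 0 ≤ ∑' n, 1 / b n := tsum_nonneg fun n => one_div_nonneg.2 (hb₀ n)
  refine ⟨∑' n, 1 / b n + 1, reciprocalBet b, by linarith,
    prudent_reciprocalBet hb₀ hsum (le_add_of_nonneg_right zero_le_one), ?_⟩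
  intro x hx hS hbdd
  have hconv := (summable_div_of_bddAbove_capital hb₀ hsum hx hbdd).hasSum.tendsto_sum_nat
  refine hS ((hconv.kronecker hmono hlim).congr fun n => ?_)
  simp only [S, mul_div_cancel₀ _ (hb _).ne']
end

section
/- Let (b_n) be an increasing sequence of positive reals with lim_n b_n = ∞ and Σ_{n=1}^∞ 1/b_n = ∞. Then for every prudent strategy (K_0, M) for Skeptic in the one-sided unbounded forecasting game there exists a path x such that sup_n K_n(x) < ∞ and limsup_{n→∞} |S_n|/b_n ≥ 1; in particular, no prudent strategy weakly forces S_n/b_n → 0. -/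
open Filter Set

/-!
Reality plays `-1` except that she jumps to `2 b_{n+1}` whenever Skeptic's bet, necessarily
nonnegative by prudence, would gain him at most `2⁻ᵏ` from her `k`-th jump; so his capital stays
below `K₀ + 2`. If she jumped only finitely often, his bets would eventually exceed `c / b_{n+1}`
while her moves `-1` drain them from his capital, forcing `Σ 1 / b_n < ∞`. Each jump makes
`|S_n| ≥ b_n` just before or just after it.
-/

theorem capital_succ (K₀ : ℝ) (M : List ℝ → ℝ) (x : ℕ → ℝ) (n : ℕ) :
    capital K₀ M x (n + 1) = capital K₀ M x n + M (List.ofFn fun j : Fin n => x j) * x n := by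
  rw [capital, capital, Finset.sum_range_succ, add_assoc]

theorem capital_congr (K₀ : ℝ) (M : List ℝ → ℝ) {x y : ℕ → ℝ} {n : ℕ}
    (h : ∀ i < n, x i = y i) : capital K₀ M x n = capital K₀ M y n := by
  refine congrArg (K₀ + ·) (Finset.sum_congr rfl fun i hi => ?_)
  have hi : i < n := Finset.mem_range.mp hi
  rw [h i hi, List.ofFn_inj.mpr (funext fun j : Fin i => h j (j.2.trans hi))]

namespace Prudent

variable {K₀ : ℝ} {M : List ℝ → ℝ} {x : ℕ → ℝ}

/-- A negative bet would be ruined by a large enough nonnegative move of Reality. -/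
theorem bet_nonneg (hP : Prudent K₀ M) (hx : ∀ n, -1 ≤ x n) (n : ℕ) :
    0 ≤ M (List.ofFn fun j : Fin n => x j) := by
  set m := M (List.ofFn fun j : Fin n => x j)
  by_contra! hm
  set t := (capital K₀ M x n + 1) / -m
  have ht : 0 ≤ t := div_nonneg (by linarith [hP x hx n]) (by linarith)
  set y := Function.update x n t
  have hyx : ∀ i < n, y i = x i := fun i hi => Function.update_of_ne hi.ne _ _
  have hy : ∀ i, -1 ≤ y i := fun i => by
    rcases eq_or_ne i n with rfl | hi
    · simp only [y, Function.update_self]; linarith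
    · simp only [y, Function.update_of_ne hi]; exact hx i
  have hruin : capital K₀ M y (n + 1) = -1 := by
    rw [capital_succ, capital_congr K₀ M hyx, List.ofFn_inj.mpr (funext fun j : Fin n => hyx j j.2),
      show y n = t from Function.update_self ..]
    change capital K₀ M x n + m * ((capital K₀ M x n + 1) / -m) = -1
    field_simp [hm.ne]
    ring
  linarith [hP y hy (n + 1)]

theorem summable_bet_of_eq_neg_one (hP : Prudent K₀ M) (hx : ∀ n, -1 ≤ x n) {N : ℕ}
    (hN : ∀ n ≥ N, x n = -1) : Summable fun n => M (List.ofFn fun j : Fin n => x j) := by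
  set bet := fun n => M (List.ofFn fun j : Fin n => x j)
  have hdrain : ∀ m, capital K₀ M x (N + m) + ∑ i ∈ Finset.range m, bet (N + i) =
      capital K₀ M x N := by
    intro m
    induction m with
    | zero => simp
    | succ m ih =>
      rw [← add_assoc, capital_succ, hN _ (by omega), Finset.sum_range_succ]
      linarith
  refine (summable_nat_add_iff N).1
    (summable_of_sum_range_le (c := capital K₀ M x N) (fun n => hP.bet_nonneg hx _) fun m => ?_)
  simp only [add_comm _ N]
  linarith [hdrain m, hP x hx (N + m)]

end Prudent

section Reality

variable (b : ℕ → ℝ) (M : List ℝ → ℝ)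

/-- `s = (history, k)` is Reality's state after `n` rounds, `k` counting her jumps so far; a jump
to `2 b_{n+1}` is cheap if it would earn Skeptic at most `2⁻ᵏ`. -/
def CheapJump (n : ℕ) (s : List ℝ × ℕ) : Prop :=
  M s.1 * (2 * b (n + 1)) ≤ 2⁻¹ ^ s.2

open Classical in
noncomputable def realityState : ℕ → List ℝ × ℕ
  | 0 => ([], 0)
  | n + 1 =>
    if CheapJump b M n (realityState n) then
      ((realityState n).1 ++ [2 * b (n + 1)], (realityState n).2 + 1)
    else ((realityState n).1 ++ [-1], (realityState n).2)

open Classical in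
noncomputable def realityPath (n : ℕ) : ℝ :=
  if CheapJump b M n (realityState b M n) then 2 * b (n + 1) else -1

variable {b M}

theorem realityState_succ_of_cheap {n : ℕ} (h : CheapJump b M n (realityState b M n)) :
    realityState b M (n + 1) =
      ((realityState b M n).1 ++ [2 * b (n + 1)], (realityState b M n).2 + 1) := by
  rw [realityState, if_pos h]

theorem realityState_succ_of_not_cheap {n : ℕ} (h : ¬CheapJump b M n (realityState b M n)) :
    realityState b M (n + 1) = ((realityState b M n).1 ++ [-1], (realityState b M n).2) := by
  rw [realityState, if_neg h]

theorem realityState_fst (n : ℕ) :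
    (realityState b M n).1 = List.ofFn fun j : Fin n => realityPath b M j := by
  induction n with
  | zero => rfl
  | succ n ih =>
    rw [List.ofFn_succ', List.concat_eq_append]
    simp only [Fin.val_castSucc, Fin.val_last, ← ih]
    by_cases h : CheapJump b M n (realityState b M n)
    · rw [realityState_succ_of_cheap h, realityPath, if_pos h]
    · rw [realityState_succ_of_not_cheap h, realityPath, if_neg h]

theorem neg_one_le_realityPath (hb : ∀ n, 0 ≤ b n) (n : ℕ) : -1 ≤ realityPath b M n := by
  unfold realityPath
  split_ifs
  · linarith [hb (n + 1)]
  · exact le_rfl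

/-- The `k`-th jump earns Skeptic at most `2⁻ᵏ`, and the moves `-1` cost him his nonnegative bet. -/
theorem capital_realityPath_le {K₀ : ℝ} (hb : ∀ n, 0 ≤ b n) (hP : Prudent K₀ M) (n : ℕ) :
    capital K₀ M (realityPath b M) n ≤ K₀ + 2 - 2 * 2⁻¹ ^ (realityState b M n).2 := by
  induction n with
  | zero => simp [capital, realityState]
  | succ n ih =>
    have hbet := hP.bet_nonneg (neg_one_le_realityPath (M := M) hb) n
    rw [capital_succ, ← realityState_fst] at *
    by_cases h : CheapJump b M n (realityState b M n)
    · rw [realityPath, if_pos h, realityState_succ_of_cheap h, pow_succ]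
      unfold CheapJump at h
      linarith
    · rw [realityPath, if_neg h, realityState_succ_of_not_cheap h]
      linarith

theorem frequently_cheapJump {K₀ : ℝ} (hb : ∀ n, 0 < b n) (hsum : ¬Summable fun n => 1 / b n)
    (hP : Prudent K₀ M) : ∃ᶠ n in atTop, CheapJump b M n (realityState b M n) := by
  by_contra! h
  obtain ⟨N, hN⟩ := eventually_atTop.1 h
  have hjumps : ∀ n ≥ N, (realityState b M n).2 = (realityState b M N).2 :=
    Nat.le_induction rfl fun n hn ih => by rw [realityState_succ_of_not_cheap (hN n hn), ih]
  have hbet := hP.summable_bet_of_eq_neg_one (neg_one_le_realityPath fun n => (hb n).le)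
    fun n hn => if_neg (hN n hn)
  set c := (2⁻¹ : ℝ) ^ (realityState b M N).2 / 2 with hc_def
  have hc : 0 < c := by positivity
  suffices Summable fun n => c * (1 / b (n + 1)) from
    hsum ((summable_nat_add_iff 1).1 ((summable_mul_left_iff hc.ne').1 this))
  refine hbet.of_norm_bounded_eventually_nat (eventually_atTop.2 ⟨N, fun n hn => ?_⟩)
  have hbn := hb (n + 1)
  have hcost := hN n hn
  rw [CheapJump, not_le, hjumps n hn, realityState_fst] at hcost
  rw [Real.norm_of_nonneg (by positivity), hc_def]
  field_simp
  linarith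

end Reality

/-- A jump to at least `2 b_{n+1}` leaves `|S|` at least `b` either just before or just after it. -/
theorem frequently_le_abs_S {b x : ℕ → ℝ} (hmono : Monotone b)
    (h : ∃ᶠ n in atTop, 2 * b (n + 1) ≤ x n) : ∃ᶠ n in atTop, b n ≤ |S x n| := by
  rw [frequently_atTop] at h ⊢
  intro N
  obtain ⟨n, hnN, hn⟩ := h N
  by_cases hS : S x n ≤ -b (n + 1)
  · exact ⟨n, hnN, le_abs.2 (Or.inr (by linarith [hmono n.le_succ]))⟩
  · have hSsucc : S x (n + 1) = S x n + x n := Finset.sum_range_succ _ _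
    exact ⟨n + 1, by omega, le_abs.2 (Or.inl (by linarith))⟩

theorem reality_defeats_slln_rate_general (b : ℕ → ℝ) (hb : ∀ n, 0 < b n) (hmono : Monotone b)
    (hsum : ¬ Summable fun n => 1 / b n) :
    ∀ K₀ : ℝ, ∀ M : List ℝ → ℝ, 0 < K₀ → Prudent K₀ M →
      (∃ x : ℕ → ℝ, (∀ n, -1 ≤ x n) ∧
        BddAbove (Set.range fun n => capital K₀ M x n) ∧
        1 ≤ Filter.limsup (fun n => ((|S x n| / b n : ℝ) : EReal)) Filter.atTop) ∧
      ¬ (∀ x : ℕ → ℝ, (∀ n, -1 ≤ x n) →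
          ¬ Filter.Tendsto (fun n => S x n / b n) Filter.atTop (nhds 0) →
          ¬ BddAbove (Set.range fun n => capital K₀ M x n)) := by
  intro K₀ M _ hP
  set x := realityPath b M
  have hx : ∀ n, -1 ≤ x n := neg_one_le_realityPath fun n => (hb n).le
  have hbdd : BddAbove (range fun n => capital K₀ M x n) := ⟨K₀ + 2, forall_mem_range.2 fun n => by
    linarith [capital_realityPath_le (fun n => (hb n).le) hP n,
      pow_pos (by norm_num : (0 : ℝ) < 2⁻¹) (realityState b M n).2]⟩
  have hfreq : ∃ᶠ n in atTop, 1 ≤ |S x n| / b n :=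
    (frequently_le_abs_S hmono ((frequently_cheapJump hb hsum hP).mono fun n h =>
      (if_pos h).ge)).mono fun n h => (one_le_div (hb n)).2 h
  have hlimsup : 1 ≤ limsup (fun n => ((|S x n| / b n : ℝ) : EReal)) atTop :=
    le_limsup_of_frequently_le (hfreq.mono fun n h => EReal.coe_le_coe_iff.2 h)
  have hnot : ¬Tendsto (fun n => S x n / b n) atTop (nhds 0) := fun ht => by
    obtain ⟨n, h1, h2⟩ :=
      (hfreq.and_eventually (ht.eventually (Metric.ball_mem_nhds 0 one_pos))).exists
    rw [Real.dist_0_eq_abs, abs_div, abs_of_pos (hb n)] at h2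
    linarith
  exact ⟨⟨x, hx, hbdd, hlimsup⟩, fun H => H x hx hnot hbdd⟩

theorem reality_defeats_slln_rate (b : ℕ → ℝ) (hb : ∀ n, 0 < b n) (hmono : Monotone b)
    (hlim : Filter.Tendsto b Filter.atTop Filter.atTop)
    (hsum : ¬ Summable fun n => 1 / b n) :
    ∀ K₀ : ℝ, ∀ M : List ℝ → ℝ, 0 < K₀ → Prudent K₀ M →
      (∃ x : ℕ → ℝ, (∀ n, -1 ≤ x n) ∧
        BddAbove (Set.range fun n => capital K₀ M x n) ∧
        1 ≤ Filter.limsup (fun n => ((|S x n| / b n : ℝ) : EReal)) Filter.atTop) ∧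
      ¬ (∀ x : ℕ → ℝ, (∀ n, -1 ≤ x n) →
          ¬ Filter.Tendsto (fun n => S x n / b n) Filter.atTop (nhds 0) →
          ¬ BddAbove (Set.range fun n => capital K₀ M x n)) :=
  reality_defeats_slln_rate_general b hb hmono hsum
end
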